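/- arXiv:0704.0105 — 4 statements merged into one kernel-verified Lean document; each statement's English description precedes it below -/
import Mathlib

section
/- Let M be a compact metric (or compact normal) space and ζ : C(M) → ℝ monotone, additive with respect to constants, with ζ(0) = 0 and ζ(H) + ζ(−H) ≥ 0 for all H. Then every superheavy closed subset of M intersects every heavy closed subset of M. In particular, any two superheavy closed subsets intersect. -/
/-- On a compact metric space, every superheavy closed subset intersects every heavy
closed subset; in particular any two superheavy closed subsets intersect. Here `ζ` is
monotone, additive with respect to constants, normalized, and satisfies
`ζ H + ζ(−H) ≥ 0` for all `H`. -/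
theorem superheavy_intersects_heavy {M : Type*} [MetricSpace M] [CompactSpace M]
    (ζ : C(M, ℝ) → ℝ)
    (hmono : ∀ F G : C(M, ℝ), (∀ x, F x ≤ G x) → ζ F ≤ ζ G)
    (hconst : ∀ (F : C(M, ℝ)) (c : ℝ), ζ (F + ContinuousMap.const M c) = ζ F + c)
    (hzero : ζ 0 = 0)
    (htri : ∀ H : C(M, ℝ), 0 ≤ ζ H + ζ (-H)) :
    (∀ X Y : Set M, IsClosed X → X.Nonempty → IsClosed Y → Y.Nonempty →
      (∀ H : C(M, ℝ), ζ H ≤ sSup (⇑H '' X)) →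
      (∀ H : C(M, ℝ), sInf (⇑H '' Y) ≤ ζ H) →
      (X ∩ Y).Nonempty) ∧
    (∀ X Y : Set M, IsClosed X → X.Nonempty → IsClosed Y → Y.Nonempty →
      (∀ H : C(M, ℝ), ζ H ≤ sSup (⇑H '' X)) →
      (∀ H : C(M, ℝ), ζ H ≤ sSup (⇑H '' Y)) →
      (X ∩ Y).Nonempty) := by
  have main : ∀ X Y : Set M, IsClosed X → X.Nonempty → IsClosed Y → Y.Nonempty →
      (∀ H : C(M, ℝ), ζ H ≤ sSup (⇑H '' X)) →
      (∀ H : C(M, ℝ), sInf (⇑H '' Y) ≤ ζ H) →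
      (X ∩ Y).Nonempty := by
    intro X Y hX hXne hY hYne hsh hh
    by_contra hemp
    rw [Set.not_nonempty_iff_eq_empty] at hemp
    obtain ⟨f, hf0, hf1, hficc⟩ := exists_continuous_zero_one_of_isClosed hX hY
      (Set.disjoint_iff_inter_eq_empty.mpr hemp)
    have h1 : ζ f ≤ 0 := by
      have := hsh f
      have him : ⇑f '' X = {0} := by
        apply Set.Subset.antisymm
        · rintro _ ⟨x, hx, rfl⟩; exact hf0 hx
        · rintro _ rfl
          obtain ⟨x, hx⟩ := hXne
          exact ⟨x, hx, hf0 hx⟩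
      rw [him, csSup_singleton] at this
      exact this
    have h2 : (1 : ℝ) ≤ ζ f := by
      have := hh f
      have him : ⇑f '' Y = {1} := by
        apply Set.Subset.antisymm
        · rintro _ ⟨x, hx, rfl⟩; exact hf1 hx
        · rintro _ rfl
          obtain ⟨y, hy⟩ := hYne
          exact ⟨y, hy, hf1 hy⟩
      rw [him, csInf_singleton] at this
      exact this
    linarith
  refine ⟨main, fun X Y hX hXne hY hYne hshX hshY => ?_⟩
  apply main X Y hX hXne hY hYne hshX
  intro H
  have h1 : ζ (-H) ≤ sSup (⇑(-H) '' Y) := hshY (-H)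
  have h2 : 0 ≤ ζ H + ζ (-H) := htri H
  have hbdd : BddAbove (⇑H '' Y) :=
    (IsCompact.image (hY.isCompact) H.continuous).bddAbove
  have hbdd' : BddBelow (⇑H '' Y) :=
    (IsCompact.image (hY.isCompact) H.continuous).bddBelow
  have key : sSup (⇑(-H) '' Y) = - sInf (⇑H '' Y) := by
    have : ⇑(-H) '' Y = -(⇑H '' Y) := by
      ext z
      simp only [Set.mem_image, Set.mem_neg, ContinuousMap.coe_neg, Pi.neg_apply]
      constructor
      · rintro ⟨y, hy, rfl⟩; exact ⟨y, hy, by ring⟩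
      · rintro ⟨y, hy, hz⟩; exact ⟨y, hy, by linarith⟩
    rw [this, Real.sInf_def, neg_neg]
  rw [key] at h1
  linarith
end

section
/- Let M be a compact metric space and ζ, ζ₁, …, ζ_d : C(M) → ℝ functionals, each monotone and 1-Lipschitz with respect to the uniform norm, such that ζ(F) ≤ max_{i = 1,…,d} ζ_i(F) for all F ∈ C(M), and ζ_i(F) ≤ 0 whenever F ≤ 0 and ζ_i(0) = 0 for each i. If a closed subset X ⊆ M is heavy with respect to ζ (ζ(H) ≥ inf_X H for all H) then X is heavy with respect to ζ_i for at least one index i. -/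
open Metric


/-- If a closed subset `X` of a compact metric space is heavy with respect to a
monotone 1-Lipschitz functional `ζ` which is dominated by the maximum of finitely many
monotone 1-Lipschitz functionals `ζᵢ`, each of which is nonpositive on nonpositive
functions and normalized, then `X` is heavy with respect to at least one `ζᵢ`. -/
theorem heavy_wrt_some_summand {M : Type*} [MetricSpace M] [CompactSpace M]
    {d : ℕ} (hd : 0 < d)
    (ζ : C(M, ℝ) → ℝ) (ζi : Fin d → (C(M, ℝ) → ℝ))
    (hmono : ∀ F G : C(M, ℝ), (∀ x, F x ≤ G x) → ζ F ≤ ζ G)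
    (hlip : ∀ F G : C(M, ℝ), |ζ F - ζ G| ≤ ‖F - G‖)
    (hmonoi : ∀ i, ∀ F G : C(M, ℝ), (∀ x, F x ≤ G x) → ζi i F ≤ ζi i G)
    (hlipi : ∀ i, ∀ F G : C(M, ℝ), |ζi i F - ζi i G| ≤ ‖F - G‖)
    (hmax : ∀ F : C(M, ℝ), ∃ i, ζ F ≤ ζi i F)
    (hneg : ∀ i, ∀ F : C(M, ℝ), (∀ x, F x ≤ 0) → ζi i F ≤ 0)
    (hzeroi : ∀ i, ζi i 0 = 0)
    (X : Set M) (hXcl : IsClosed X) (hXne : X.Nonempty)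
    (hheavy : ∀ H : C(M, ℝ), sInf (⇑H '' X) ≤ ζ H) :
    ∃ i, ∀ H : C(M, ℝ), sInf (⇑H '' X) ≤ ζi i H := by
  classical
  have hbdd : ∀ H : C(M, ℝ), BddBelow (⇑H '' X) := by
    intro H
    refine ⟨-‖H‖, ?_⟩
    rintro y ⟨x, -, rfl⟩
    have h1 : ‖H x‖ ≤ ‖H‖ := H.norm_coe_le_norm x
    have h2 := abs_le.mp (by simpa [Real.norm_eq_abs] using h1)
    linarith [h2.1]
  -- the test functions
  set Hj : ℕ → C(M, ℝ) := fun j =>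
    ⟨fun x => (j : ℝ) * (1 - min ((j : ℝ) * infDist x X) 2), by
      exact (continuous_const.mul (continuous_const.sub
        (((continuous_const.mul (continuous_infDist_pt X)).min continuous_const))))⟩
    with hHjdef
  have hHjval : ∀ j x, Hj j x = (j : ℝ) * (1 - min ((j : ℝ) * infDist x X) 2) := by
    intro j x; rfl
  have hHjX : ∀ j, ∀ x ∈ X, Hj j x = (j : ℝ) := by
    intro j x hx
    simp [hHjval, infDist_zero_of_mem hx]
  have hsInf : ∀ j, sInf (⇑(Hj j) '' X) = (j : ℝ) := by
    intro j
    apply le_antisymm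
    · exact csInf_le (hbdd _) ⟨hXne.choose, hXne.choose_spec, hHjX j _ hXne.choose_spec⟩
    · refine le_csInf (hXne.image _) ?_
      rintro y ⟨x, hx, rfl⟩
      exact (hHjX j x hx).ge
  have hζHj : ∀ j : ℕ, (j : ℝ) ≤ ζ (Hj j) := by
    intro j
    have := hheavy (Hj j)
    rwa [hsInf j] at this
  choose f hf using fun j => hmax (Hj j)
  obtain ⟨i, hi⟩ := Finite.exists_infinite_fiber f
  have hiinf : (f ⁻¹' {i}).Infinite := Set.infinite_coe_iff.mp hi
  refine ⟨i, fun H => ?_⟩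
  set c := sInf (⇑H '' X) with hc
  refine le_of_forall_pos_le_add fun ε hε => ?_
  -- a neighborhood of X on which H > c - ε
  have hXU : X ⊆ {x | c - ε < H x} := by
    intro x hx
    have : c ≤ H x := csInf_le (hbdd H) ⟨x, hx, rfl⟩
    simp only [Set.mem_setOf_eq]; linarith
  have hUopen : IsOpen {x | c - ε < H x} :=
    isOpen_lt continuous_const H.continuous
  obtain ⟨δ, hδ, hthick⟩ :=
    hXcl.isCompact.exists_thickening_subset_open hUopen hXU
  obtain ⟨N, hN⟩ := exists_nat_ge (max (max c (2 / δ)) ((c + ‖H‖) / 2))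
  obtain ⟨j, hjS, hjN⟩ := hiinf.exists_gt N
  have hfj : f j = i := hjS
  have hjR : (N : ℝ) ≤ (j : ℝ) := by exact_mod_cast hjN.le
  have hjc : c ≤ (j : ℝ) := le_trans (le_trans (le_max_left _ _) (le_max_left _ _)) (hN.trans hjR)
  have hjδ : 2 / δ ≤ (j : ℝ) := le_trans (le_trans (le_max_right _ _) (le_max_left _ _)) (hN.trans hjR)
  have hjH : c + ‖H‖ ≤ 2 * (j : ℝ) := by
    have : (c + ‖H‖) / 2 ≤ (j : ℝ) := le_trans (le_max_right _ _) (hN.trans hjR)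
    linarith
  -- ζi i (Hj j) ≥ j
  have hA : (j : ℝ) ≤ ζi i (Hj j) := le_trans (hζHj j) (hfj ▸ hf j)
  -- shifted function
  set K : C(M, ℝ) := Hj j - ContinuousMap.const M ((j : ℝ) - c) with hK
  have hKval : ∀ x, K x = Hj j x - ((j : ℝ) - c) := fun x => rfl
  have hB : c ≤ ζi i K := by
    have hnorm : ‖Hj j - K‖ ≤ (j : ℝ) - c := by
      rw [ContinuousMap.norm_le _ (by linarith)]
      intro x
      have : (Hj j - K) x = (j : ℝ) - c := by
        simp [hKval, ContinuousMap.sub_apply]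
      rw [this, Real.norm_eq_abs, abs_of_nonneg (by linarith)]
    have := abs_le.mp (le_trans (hlipi i (Hj j) K) hnorm)
    linarith [this.2, hA]
  -- pointwise: K ≤ H + ε
  have hC : ∀ x, K x ≤ (H + ContinuousMap.const M ε) x := by
    intro x
    rw [hKval, hHjval]
    simp only [ContinuousMap.add_apply, ContinuousMap.const_apply]
    have hd0 : (0 : ℝ) ≤ infDist x X := infDist_nonneg
    have hj0 : (0 : ℝ) ≤ (j : ℝ) := Nat.cast_nonneg j
    by_cases hcase : infDist x X < δ
    · have hxU : x ∈ {x | c - ε < H x} :=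
        hthick ((mem_thickening_iff_infDist_lt hXne).mpr hcase)
      have hHx : c - ε < H x := hxU
      have hmin0 : (0 : ℝ) ≤ min ((j : ℝ) * infDist x X) 2 :=
        le_min (mul_nonneg hj0 hd0) (by norm_num)
      nlinarith
    · push_neg at hcase
      have h2 : min ((j : ℝ) * infDist x X) 2 = 2 := by
        refine min_eq_right ?_
        have h1 : 2 ≤ (j : ℝ) * δ := by
          rw [div_le_iff₀ hδ] at hjδ
          linarith
        calc (2 : ℝ) ≤ (j : ℝ) * δ := h1
          _ ≤ (j : ℝ) * infDist x X := by nlinarith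
      rw [h2]
      have hHx : -‖H‖ ≤ H x := by
        have h1 : ‖H x‖ ≤ ‖H‖ := H.norm_coe_le_norm x
        have h2' := abs_le.mp (by simpa [Real.norm_eq_abs] using h1)
        linarith [h2'.1]
      nlinarith
  have hD : ζi i K ≤ ζi i (H + ContinuousMap.const M ε) := hmonoi i _ _ hC
  have hE : ζi i (H + ContinuousMap.const M ε) ≤ ζi i H + ε := by
    have hnorm : ‖(H + ContinuousMap.const M ε) - H‖ ≤ ε := by
      rw [ContinuousMap.norm_le _ hε.le]
      intro x
      have : ((H + ContinuousMap.const M ε) - H) x = ε := by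
        simp [ContinuousMap.sub_apply, ContinuousMap.add_apply]
      rw [this, Real.norm_eq_abs, abs_of_nonneg hε.le]
    have := abs_le.mp (le_trans (hlipi i (H + ContinuousMap.const M ε) H) hnorm)
    linarith [this.2]
  linarith
end

section
/- Let M₁, M₂ be compact topological spaces and M = M₁ × M₂. Let ζ₁ : C(M₁) → ℝ, ζ₂ : C(M₂) → ℝ, ζ : C(M) → ℝ be functionals such that: ζ is monotone; ζ(G₁ ⊕ G₂) = ζ₁(G₁) + ζ₂(G₂) for all G₁ ∈ C(M₁), G₂ ∈ C(M₂), where (G₁ ⊕ G₂)(z₁, z₂) := G₁(z₁) + G₂(z₂); and ζ(G) ≥ 0 whenever G ≥ 0. If Xᵢ ⊆ Mᵢ is a closed set with the property that ζᵢ(Gᵢ) = 0 for every Gᵢ ≥ 0 vanishing on a neighborhood of Xᵢ (i = 1, 2), then ζ(G) = 0 for every G ∈ C(M) with G ≥ 0 vanishing on a neighborhood of X₁ × X₂. (This is the key step showing that the product of two superheavy sets is superheavy, given the product formula for spectral invariants.) -/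
lemma bump_exists {M : Type*} [TopologicalSpace M] [CompactSpace M] [T2Space M]
    (X U : Set M) (hX : IsClosed X) (hU : IsOpen U) (hXU : X ⊆ U) (K : ℝ) (hK : 0 ≤ K) :
    ∃ F : C(M, ℝ), (∀ x, 0 ≤ F x) ∧ (∀ x, F x ≤ K) ∧
      (∃ V : Set M, IsOpen V ∧ X ⊆ V ∧ ∀ x ∈ V, F x = 0) ∧
      (∀ x ∉ U, F x = K) := by
  obtain ⟨V, hVopen, hXV, hVU⟩ := normal_exists_closure_subset hX hU hXU
  obtain ⟨f, hf0, hf1, hf01⟩ := exists_continuous_zero_one_of_isClosed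
    isClosed_closure hU.isClosed_compl
    (Set.disjoint_left.mpr fun x hx hx' => hx' (hVU hx))
  refine ⟨K • f, fun x => by have := (hf01 x).1; simpa using mul_nonneg hK this, fun x => ?_, ⟨V, hVopen, hXV, fun x hx => ?_⟩,
    fun x hx => ?_⟩
  · calc K * f x ≤ K * 1 := by nlinarith [(hf01 x).2]
    _ = K := mul_one K
  · simp [hf0 (subset_closure hx)]
  · simp [hf1 hx]


/-- Product of superheavy sets is superheavy (key step): given functionals
`ζ₁, ζ₂, ζ` on continuous functions of `M₁`, `M₂` and `M = M₁ × M₂` such that `ζ` is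
monotone, nonnegative on nonnegative functions, and satisfies the product formula
`ζ(G₁ ⊕ G₂) = ζ₁(G₁) + ζ₂(G₂)`, if `ζᵢ` vanishes on every nonnegative function vanishing
on a neighborhood of a closed set `Xᵢ ⊆ Mᵢ` (i = 1,2), then `ζ` vanishes on every
nonnegative function vanishing on a neighborhood of `X₁ × X₂`. -/
theorem product_superheavy_key {M₁ M₂ : Type*}
    [TopologicalSpace M₁] [CompactSpace M₁] [T2Space M₁]
    [TopologicalSpace M₂] [CompactSpace M₂] [T2Space M₂]
    (ζ : C(M₁ × M₂, ℝ) → ℝ) (ζ₁ : C(M₁, ℝ) → ℝ) (ζ₂ : C(M₂, ℝ) → ℝ)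
    (hmono : ∀ F G : C(M₁ × M₂, ℝ), (∀ x, F x ≤ G x) → ζ F ≤ ζ G)
    (hprod : ∀ (G₁ : C(M₁, ℝ)) (G₂ : C(M₂, ℝ)),
      ζ (G₁.comp ⟨Prod.fst, continuous_fst⟩ + G₂.comp ⟨Prod.snd, continuous_snd⟩)
        = ζ₁ G₁ + ζ₂ G₂)
    (hpos : ∀ G : C(M₁ × M₂, ℝ), (∀ x, 0 ≤ G x) → 0 ≤ ζ G)
    (X₁ : Set M₁) (X₂ : Set M₂) (hX₁ : IsClosed X₁) (hX₂ : IsClosed X₂)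
    (h₁ : ∀ G : C(M₁, ℝ), (∀ x, 0 ≤ G x) →
      (∃ U : Set M₁, IsOpen U ∧ X₁ ⊆ U ∧ ∀ x ∈ U, G x = 0) → ζ₁ G = 0)
    (h₂ : ∀ G : C(M₂, ℝ), (∀ x, 0 ≤ G x) →
      (∃ U : Set M₂, IsOpen U ∧ X₂ ⊆ U ∧ ∀ x ∈ U, G x = 0) → ζ₂ G = 0) :
    ∀ G : C(M₁ × M₂, ℝ), (∀ x, 0 ≤ G x) →
      (∃ U : Set (M₁ × M₂), IsOpen U ∧ X₁ ×ˢ X₂ ⊆ U ∧ ∀ x ∈ U, G x = 0) → ζ G = 0 := by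
  intro G hG ⟨U, hUopen, hXU, hGU⟩
  -- K bounds G
  obtain ⟨K0, hK0⟩ := (isCompact_range G.continuous).bddAbove
  set K := max K0 0 with hKdef
  have hK : 0 ≤ K := le_max_right _ _
  have hGK : ∀ x, G x ≤ K := fun x =>
    le_trans (hK0 (Set.mem_range_self x)) (le_max_left _ _)
  -- tube lemma
  obtain ⟨U₁, U₂, hU₁open, hU₂open, hXU₁, hXU₂, htube⟩ :=
    generalized_tube_lemma (hX₁.isCompact) (hX₂.isCompact) hUopen hXU
  obtain ⟨G₁, hG₁pos, hG₁le, hG₁van, hG₁big⟩ := bump_exists X₁ U₁ hX₁ hU₁open hXU₁ K hK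
  obtain ⟨G₂, hG₂pos, hG₂le, hG₂van, hG₂big⟩ := bump_exists X₂ U₂ hX₂ hU₂open hXU₂ K hK
  have hle : ∀ x : M₁ × M₂, G x ≤
      ((G₁.comp ⟨Prod.fst, continuous_fst⟩ + G₂.comp ⟨Prod.snd, continuous_snd⟩ :
        C(M₁ × M₂, ℝ))) x := by
    rintro ⟨x₁, x₂⟩
    simp only [ContinuousMap.add_apply, ContinuousMap.comp_apply, ContinuousMap.coe_mk]
    by_cases h1 : x₁ ∈ U₁
    · by_cases h2 : x₂ ∈ U₂
      · have : G (x₁, x₂) = 0 := hGU _ (htube ⟨h1, h2⟩)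
        rw [this]; exact add_nonneg (hG₁pos x₁) (hG₂pos x₂)
      · have := hG₂big x₂ h2
        nlinarith [hG₁pos x₁, hGK (x₁, x₂)]
    · have := hG₁big x₁ h1
      nlinarith [hG₂pos x₂, hGK (x₁, x₂)]
  have h1 := hmono G _ hle
  rw [hprod G₁ G₂, h₁ G₁ hG₁pos hG₁van, h₂ G₂ hG₂pos hG₂van] at h1
  have h2 := hpos G hG
  linarith
end

section
/- Let 𝒦 be a field equipped with a function ν : 𝒦 → ℝ ∪ {−∞} such that ν(0) = −∞, ν(λμ) = ν(λ) + ν(μ), and ν(λ + μ) ≤ max(ν(λ), ν(μ)) (a non-Archimedean valuation written additively). Let V be a finite-dimensional 𝒦-vector space with basis x₁, …, x_n and filter values F(x₁), …, F(x_n) ∈ ℝ that are 'generic': F(x_i) − F(x_j) is not in the value group ν(𝒦 \ {0}) for i ≠ j. Extend F to V by F(Σ λⱼ xⱼ) = max over j with λⱼ ≠ 0 of (ν(λⱼ) + F(xⱼ)). Call e ∈ V normalized if e = x_p + r where r is a combination of the other basis vectors with F(r) < F(x_p), and call a system e₁, …, e_m normal if each e_i is normalized with pairwise distinct leading indices. Then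 for any normal system e₁, …, e_m and any scalars λ₁, …, λ_m ∈ 𝒦: F(Σᵢ λᵢ eᵢ) = maxᵢ F(λᵢ eᵢ). -/
/-!
Genericity makes the values `ν(λᵢ) + F(x_{p(i)})` of the nonzero terms pairwise distinct, so a
single term `i₀` dominates. In the coordinate `p(i₀)` that term contributes `λ_{i₀}`, while by
normalization and dominance every other term contributes something strictly smaller; hence this
coordinate alone attains `maxᵢ F(λᵢ eᵢ)`. The reverse inequality is the ultrametric inequality.
-/

open Finset

lemma WithBot.eq_zero_of_add_self_eq_self {x : WithBot ℝ} (hx : x ≠ ⊥) (h : x + x = x) :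
    x = 0 := by
  lift x to ℝ using hx
  norm_cast at h ⊢
  linarith

lemma WithBot.eq_zero_of_add_self_eq_zero {x : WithBot ℝ} (h : x + x = 0) : x = 0 := by
  induction x using WithBot.recBotCoe with
  | bot => simp at h
  | coe x =>
    norm_cast at h ⊢
    linarith

section Valuation

variable {K : Type*} [Field K] {ν : K → WithBot ℝ}

lemma val_eq_bot_of_val_one_eq_bot (hmul : ∀ a b, ν (a * b) = ν a + ν b) (h : ν 1 = ⊥)
    (a : K) : ν a = ⊥ := by
  simpa [h] using hmul a 1

lemma val_one_eq_zero (hmul : ∀ a b, ν (a * b) = ν a + ν b) (h : ν 1 ≠ ⊥) : ν 1 = 0 :=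
  WithBot.eq_zero_of_add_self_eq_self h (by rw [← hmul, one_mul])

lemma val_ne_bot (hmul : ∀ a b, ν (a * b) = ν a + ν b) (h1 : ν 1 = 0) {a : K} (ha : a ≠ 0) :
    ν a ≠ ⊥ := fun hbot => by
  simpa [mul_inv_cancel₀ ha, h1, hbot] using hmul a a⁻¹

lemma val_inv (hmul : ∀ a b, ν (a * b) = ν a + ν b) (h1 : ν 1 = 0) {a : K} {r : ℝ}
    (ha : a ≠ 0) (hr : ν a = r) : ν a⁻¹ = ((-r : ℝ) : WithBot ℝ) := by
  have hsum : ν a + ν a⁻¹ = 0 := by rw [← hmul, mul_inv_cancel₀ ha, h1]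
  lift ν a⁻¹ to ℝ using val_ne_bot hmul h1 (inv_ne_zero ha) with s
  rw [hr] at hsum
  norm_cast at hsum ⊢
  linarith

lemma val_neg (hmul : ∀ a b, ν (a * b) = ν a + ν b) (h1 : ν 1 = 0) (a : K) : ν (-a) = ν a := by
  have hm1 : ν (-1 : K) = 0 :=
    WithBot.eq_zero_of_add_self_eq_zero (by rw [← hmul, neg_one_mul, neg_neg, h1])
  rw [neg_eq_neg_one_mul, hmul, hm1, zero_add]

lemma val_add_eq_of_lt (hmul : ∀ a b, ν (a * b) = ν a + ν b) (h1 : ν 1 = 0)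
    (hadd : ∀ a b, ν (a + b) ≤ max (ν a) (ν b)) {a b : K} (h : ν b < ν a) :
    ν (a + b) = ν a := by
  refine le_antisymm ((hadd a b).trans (max_eq_left h.le).le) ?_
  by_contra! hlt
  have := hadd (a + b) (-b)
  rw [add_neg_cancel_right, val_neg hmul h1] at this
  exact this.not_gt (max_lt hlt h)

lemma val_sum_add_le (h0 : ν 0 = ⊥) (hadd : ∀ a b, ν (a + b) ≤ max (ν a) (ν b))
    {ι : Type*} {s : Finset ι} {f : ι → K} {x c : WithBot ℝ}
    (h : ∀ i ∈ s, ν (f i) + x ≤ c) : ν (∑ i ∈ s, f i) + x ≤ c := by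
  induction s using Finset.cons_induction with
  | empty => simp [h0]
  | cons a s ha ih =>
    rw [sum_cons]
    calc ν (f a + ∑ i ∈ s, f i) + x ≤ max (ν (f a)) (ν (∑ i ∈ s, f i)) + x := by
          gcongr; exact hadd _ _
      _ = max (ν (f a) + x) (ν (∑ i ∈ s, f i) + x) := (max_add_add_right _ _ _).symm
      _ ≤ c := max_le (h a (mem_cons_self a s)) (ih fun i hi => h i (mem_cons_of_mem hi))

lemma val_sum_lt (h0 : ν 0 = ⊥) (hadd : ∀ a b, ν (a + b) ≤ max (ν a) (ν b))
    {ι : Type*} {s : Finset ι} {f : ι → K} {c : WithBot ℝ} (hc : ⊥ < c)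
    (h : ∀ i ∈ s, ν (f i) < c) : ν (∑ i ∈ s, f i) < c := by
  induction s using Finset.cons_induction with
  | empty => simpa [h0]
  | cons a s ha ih =>
    rw [sum_cons]
    exact (hadd _ _).trans_lt
      (max_lt (h a (mem_cons_self a s)) (ih fun i hi => h i (mem_cons_of_mem hi)))

lemma val_add_sum_eq_of_lt (h0 : ν 0 = ⊥) (hmul : ∀ a b, ν (a * b) = ν a + ν b)
    (hadd : ∀ a b, ν (a + b) ≤ max (ν a) (ν b)) (h1 : ν 1 = 0)
    {ι : Type*} {s : Finset ι} {f : ι → K} {a : K} (ha : a ≠ 0) (h : ∀ i ∈ s, ν (f i) < ν a) :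
    ν (a + ∑ i ∈ s, f i) = ν a :=
  val_add_eq_of_lt hmul h1 hadd
    (val_sum_lt h0 hadd (bot_lt_iff_ne_bot.mpr (val_ne_bot hmul h1 ha)) h)

end Valuation

section FilteredSpace

variable {K : Type*} [Field K] {ι : Type*}

/-- Vectors are their coordinate functions in the basis `x`; zero coordinates contribute `⊥`,
which matches the paper's maximum over the `λⱼ ≠ 0`. -/
def extFilter [Fintype ι] (ν : K → WithBot ℝ) (F : ι → ℝ) (v : ι → K) : WithBot ℝ :=
  univ.sup fun j => ν (v j) + F j

def IsNormalized (ν : K → WithBot ℝ) (F : ι → ℝ) (v : ι → K) (p : ι) : Prop :=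
  v p = 1 ∧ ∀ j, j ≠ p → ν (v j) + F j < F p

def IsGeneric (ν : K → WithBot ℝ) (F : ι → ℝ) : Prop :=
  ∀ i j, i ≠ j → ∀ a : K, a ≠ 0 → ν a ≠ ((F i - F j : ℝ) : WithBot ℝ)

variable {ν : K → WithBot ℝ} {F : ι → ℝ}

lemma extFilter_sum_le [Fintype ι] (h0 : ν 0 = ⊥) (hadd : ∀ a b, ν (a + b) ≤ max (ν a) (ν b))
    {κ : Type*} (s : Finset κ) (v : κ → ι → K) :
    extFilter ν F (∑ i ∈ s, v i) ≤ s.sup fun i => extFilter ν F (v i) :=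
  Finset.sup_le fun j _ => by
    rw [Finset.sum_apply]
    exact val_sum_add_le h0 hadd fun i hi =>
      (le_sup (f := fun j => ν (v i j) + F j) (mem_univ j)).trans
        (le_sup (f := fun i => extFilter ν F (v i)) hi)

namespace IsNormalized

variable {v : ι → K} {p : ι}

lemma val_mul_apply_add_le (hv : IsNormalized ν F v p) (hmul : ∀ a b, ν (a * b) = ν a + ν b)
    (c : K) (j : ι) : ν (c * v j) + F j ≤ ν c + F p := by
  rcases eq_or_ne j p with rfl | hj
  · rw [hv.1, mul_one]
  · rw [hmul, add_assoc]
    gcongr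
    exact (hv.2 j hj).le

lemma extFilter_smul [Fintype ι] (hv : IsNormalized ν F v p)
    (hmul : ∀ a b, ν (a * b) = ν a + ν b) (c : K) : extFilter ν F (c • v) = ν c + F p :=
  le_antisymm (Finset.sup_le fun j _ => hv.val_mul_apply_add_le hmul c j)
    (le_of_eq_of_le (by simp [hv.1]) (le_sup (f := fun j => ν ((c • v) j) + F j) (mem_univ p)))

end IsNormalized

lemma IsGeneric.add_ne_add (hF : IsGeneric ν F) (hmul : ∀ a b, ν (a * b) = ν a + ν b)
    (h1 : ν 1 = 0) {i j : ι} (hij : i ≠ j) {a b : K} (ha : a ≠ 0) (hb : b ≠ 0) :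
    ν a + F i ≠ ν b + F j := by
  intro heq
  lift ν a to ℝ using val_ne_bot hmul h1 ha with x hx
  lift ν b to ℝ using val_ne_bot hmul h1 hb with y hy
  norm_cast at heq
  refine hF j i hij.symm (a * b⁻¹) (mul_ne_zero ha (inv_ne_zero hb)) ?_
  rw [hmul, ← hx, val_inv hmul h1 hb hy.symm]
  norm_cast
  linarith

variable {κ : Type*} [Fintype κ]

lemma IsGeneric.exists_dominant (hF : IsGeneric ν F) (h0 : ν 0 = ⊥)
    (hmul : ∀ a b, ν (a * b) = ν a + ν b) (h1 : ν 1 = 0) {p : κ → ι}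
    (hp : Function.Injective p) (lam : κ → K) (hne : (univ.sup fun i => ν (lam i) + F (p i)) ≠ ⊥) :
    ∃ i₀, lam i₀ ≠ 0 ∧ (univ.sup fun i => ν (lam i) + F (p i)) = ν (lam i₀) + F (p i₀) ∧
      ∀ i, i ≠ i₀ → lam i ≠ 0 → ν (lam i) + F (p i) < ν (lam i₀) + F (p i₀) := by
  have huniv : (univ : Finset κ).Nonempty := nonempty_iff_ne_empty.mpr fun h => hne (by simp [h])
  obtain ⟨i₀, -, hsup⟩ := exists_mem_eq_sup univ huniv fun i => ν (lam i) + F (p i)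
  have hlam : lam i₀ ≠ 0 := fun h => hne (by rw [hsup, h, h0, WithBot.bot_add])
  refine ⟨i₀, hlam, hsup, fun i hi hli => lt_of_le_of_ne ?_ ?_⟩
  · exact hsup ▸ le_sup (f := fun i => ν (lam i) + F (p i)) (mem_univ i)
  · exact hF.add_ne_add hmul h1 (hp.ne hi) hli hlam

lemma val_sum_smul_apply_eq_of_dominant (h0 : ν 0 = ⊥) (hmul : ∀ a b, ν (a * b) = ν a + ν b)
    (hadd : ∀ a b, ν (a + b) ≤ max (ν a) (ν b)) (h1 : ν 1 = 0) {e : κ → ι → K} {p : κ → ι}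
    (he : ∀ i, IsNormalized ν F (e i) (p i)) {lam : κ → K} {i₀ : κ} (hlam : lam i₀ ≠ 0)
    (hdom : ∀ i, i ≠ i₀ → lam i ≠ 0 → ν (lam i) + F (p i) < ν (lam i₀) + F (p i₀)) :
    ν ((∑ i, lam i • e i) (p i₀)) = ν (lam i₀) := by
  classical
  rw [Finset.sum_apply, ← add_sum_erase _ _ (mem_univ i₀)]
  simp only [Pi.smul_apply, smul_eq_mul, (he i₀).1, mul_one]
  refine val_add_sum_eq_of_lt h0 hmul hadd h1 hlam fun i hi => ?_
  rcases eq_or_ne (lam i) 0 with hli | hli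
  · rw [hli, zero_mul, h0]
    exact bot_lt_iff_ne_bot.mpr (val_ne_bot hmul h1 hlam)
  · refine (WithBot.add_lt_add_iff_right (WithBot.coe_ne_bot (a := F (p i₀)))).mp ?_
    exact ((he i).val_mul_apply_add_le hmul (lam i) (p i₀)).trans_lt
      (hdom i (ne_of_mem_erase hi) hli)

end FilteredSpace

/-- The filter of a linear combination of a normal system equals the maximum of the
filters of its terms. Here `K` is a field with a non-Archimedean valuation
`ν : K → WithBot ℝ`, the vector space `V` is modeled by coordinates `Fin n → K` in the
preferred basis, `F` is a generic filter, and the extended filter of `v` is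
`max_j (ν (v j) + F j)` (computed in `WithBot ℝ`). -/
theorem filter_of_normal_combination {K : Type*} [Field K] (ν : K → WithBot ℝ)
    (hν0 : ν 0 = ⊥)
    (hνmul : ∀ a b : K, ν (a * b) = ν a + ν b)
    (hνadd : ∀ a b : K, ν (a + b) ≤ max (ν a) (ν b))
    {n : ℕ} (F : Fin n → ℝ)
    (hgen : ∀ i j : Fin n, i ≠ j → ∀ a : K, a ≠ 0 →
      ν a ≠ ((F i - F j : ℝ) : WithBot ℝ))
    {m : ℕ} (e : Fin m → (Fin n → K)) (p : Fin m → Fin n)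
    (hp : Function.Injective p)
    (hlead : ∀ i, e i (p i) = 1)
    (hsmall : ∀ i j, j ≠ p i → ν (e i j) + (F j : WithBot ℝ) < (F (p i) : WithBot ℝ))
    (lam : Fin m → K) :
    (Finset.univ.sup fun j : Fin n => ν ((∑ i, lam i • e i) j) + (F j : WithBot ℝ)) =
      Finset.univ.sup fun i : Fin m =>
        Finset.univ.sup fun j : Fin n => ν ((lam i • e i) j) + (F j : WithBot ℝ) := by
  -- the axioms do not force `ν 1 = 0`: they also allow `ν ≡ ⊥`
  by_cases hbot1 : ν 1 = ⊥
  · simp [val_eq_bot_of_val_one_eq_bot hνmul hbot1]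
  have h1 := val_one_eq_zero hνmul hbot1
  have he : ∀ i, IsNormalized ν F (e i) (p i) := fun i => ⟨hlead i, hsmall i⟩
  change extFilter ν F (∑ i, lam i • e i) = univ.sup fun i => extFilter ν F (lam i • e i)
  refine le_antisymm (extFilter_sum_le hν0 hνadd _ _) ?_
  simp only [fun i => (he i).extFilter_smul hνmul (lam i)]
  rcases eq_or_ne (univ.sup fun i => ν (lam i) + F (p i)) ⊥ with hbot | hbot
  · exact hbot ▸ bot_le
  obtain ⟨i₀, hlam, hsup, hdom⟩ := IsGeneric.exists_dominant hgen hν0 hνmul h1 hp lam hbot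
  calc _ = ν ((∑ i, lam i • e i) (p i₀)) + F (p i₀) := by
        rw [hsup, val_sum_smul_apply_eq_of_dominant hν0 hνmul hνadd h1 he hlam hdom]
    _ ≤ extFilter ν F (∑ i, lam i • e i) :=
        le_sup (f := fun j => ν ((∑ i, lam i • e i) j) + F j) (mem_univ _)
end
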